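/- For N ∈ ℕ, ζ ∈ ℂ and φ ∈ (0,2π), the CUE and TCUE generating functions satisfy (d/dφ) Φ_N^{CUE}((0,φ);ζ) = −(N/(2π)) ζ · Φ_{N−1}^{TCUE}((0,φ);ζ). -/

import Mathlib

open MeasureTheory Real Filter Finset Topology
open scoped Real BigOperators Topology Classical

noncomputable section

/-- Normalized Lebesgue measure on `[0, 2π)^N`, i.e. `∏_{j=1}^N dθ_j/(2π)`. -/
def cubeMeasure (N : ℕ) : Measure (Fin N → ℝ) :=
  (ENNReal.ofReal ((2 * π) ^ N))⁻¹ •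
    Measure.restrict volume (Set.univ.pi fun _ : Fin N => Set.Ico (0 : ℝ) (2 * π))

/-- Generating function `Φ_N((a,b); ζ) = E[∏_j (1 - ζ·1_{a ≤ θ_j ≤ b})]`. -/
def genFun (N : ℕ) (P : (Fin N → ℝ) → ℝ) (a b : ℝ) (ζ : ℂ) : ℂ :=
  ∫ θ, (∏ j, (1 - ζ * (if a ≤ θ j ∧ θ j ≤ b then (1 : ℂ) else 0))) * (P θ : ℂ) ∂cubeMeasure N

/-- The CUE(N) joint probability density of eigen-angles. -/
def cueDensity (N : ℕ) (θ : Fin N → ℝ) : ℝ :=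
  ((N.factorial : ℝ))⁻¹ *
    ∏ p ∈ Finset.univ.filter (fun p : Fin N × Fin N => p.1 < p.2),
      ‖Complex.exp (Complex.I * (θ p.1 : ℂ)) - Complex.exp (Complex.I * (θ p.2 : ℂ))‖ ^ 2

/-- The TCUE(N) joint probability density of eigen-angles. -/
def tcueDensity (N : ℕ) (θ : Fin N → ℝ) : ℝ :=
  (((N + 1).factorial : ℝ))⁻¹ *
    (∏ p ∈ Finset.univ.filter (fun p : Fin N × Fin N => p.1 < p.2),
      ‖Complex.exp (Complex.I * (θ p.1 : ℂ)) - Complex.exp (Complex.I * (θ p.2 : ℂ))‖ ^ 2) *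
    ∏ j, ‖1 - Complex.exp (Complex.I * (θ j : ℂ))‖ ^ 2

namespace CT

def mu1 : Measure ℝ :=
  (ENNReal.ofReal (2 * π))⁻¹ • Measure.restrict volume (Set.Ico (0 : ℝ) (2 * π))

instance : IsFiniteMeasure mu1 := by
  constructor
  rw [mu1, Measure.smul_apply, Measure.restrict_apply MeasurableSet.univ, Set.univ_inter,
    Real.volume_Ico, smul_eq_mul]
  exact ENNReal.mul_lt_top (ENNReal.inv_lt_top.mpr (ENNReal.ofReal_pos.mpr (by positivity)))
    ENNReal.ofReal_lt_top

lemma cube_eq (n : ℕ) : cubeMeasure n = Measure.pi fun _ : Fin n => mu1 := by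
  symm
  apply Measure.pi_eq
  intro s hs
  rw [cubeMeasure, Measure.smul_apply, Measure.restrict_apply (MeasurableSet.univ_pi hs),
    ← Set.pi_inter_distrib, volume_pi_pi]
  simp only [mu1, Measure.smul_apply, Measure.restrict_apply (hs _), smul_eq_mul]
  rw [Finset.prod_mul_distrib, Finset.prod_const, Finset.card_univ, Fintype.card_fin,
    ENNReal.ofReal_pow (by positivity : (0:ℝ) ≤ 2 * π), ← ENNReal.inv_pow]

def ek (k : ℤ) (θ : ℝ) : ℂ := Complex.exp (Complex.I * k * θ)

def wt (ζ : ℂ) (t θ : ℝ) : ℂ := 1 - ζ * (if 0 ≤ θ ∧ θ ≤ t then 1 else 0)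

def FF (ζ : ℂ) (k : ℤ) (t : ℝ) : ℂ := ∫ θ, wt ζ t θ * ek k θ ∂mu1

lemma ek_continuous (k : ℤ) : Continuous (ek k) := by
  unfold ek; fun_prop

lemma ek_mul (k l : ℤ) (θ : ℝ) : ek k θ * ek l θ = ek (k + l) θ := by
  unfold ek; rw [← Complex.exp_add]; congr 1; push_cast; ring

lemma ek_zero (θ : ℝ) : ek 0 θ = 1 := by simp [ek]

lemma ek_conj (k : ℤ) (θ : ℝ) : (starRingEnd ℂ) (ek k θ) = ek (-k) θ := by
  unfold ek
  rw [← Complex.exp_conj]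
  congr 1
  simp only [map_mul, Complex.conj_I, map_intCast, Complex.conj_ofReal]
  push_cast
  ring

lemma wt_eq (ζ : ℂ) (t θ : ℝ) :
    wt ζ t θ = 1 - ζ * Set.indicator (Set.Icc 0 t) (fun _ => (1:ℂ)) θ := by
  simp [wt, Set.indicator_apply, Set.mem_Icc]

lemma integrable_wt_ek (ζ : ℂ) (t : ℝ) (k : ℤ) :
    Integrable (fun θ => wt ζ t θ * ek k θ) mu1 := by
  have hek : Integrable (ek k) mu1 := by
    rw [mu1]
    rw [integrable_smul_measure (ENNReal.inv_ne_zero.mpr ENNReal.ofReal_ne_top) (ENNReal.inv_ne_top.mpr (ENNReal.ofReal_pos.mpr (by positivity)).ne')]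
    exact ((ek_continuous k).integrableOn_Icc (μ := volume) (a := 0) (b := 2*π)).mono_set
      Set.Ico_subset_Icc_self
  have hind : Integrable (fun θ => Set.indicator (Set.Icc 0 t) (fun _ => (1:ℂ)) θ * ek k θ) mu1 := by
    have : (fun θ => Set.indicator (Set.Icc 0 t) (fun _ => (1:ℂ)) θ * ek k θ)
        = Set.indicator (Set.Icc 0 t) (ek k) := by
      funext θ; by_cases h : θ ∈ Set.Icc 0 t <;> simp [h]
    rw [this]
    exact hek.indicator measurableSet_Icc
  have := hek.sub ((hind.const_mul ζ))
  convert this using 1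
  funext θ
  simp only [Pi.sub_apply]
  rw [wt_eq]
  ring

lemma integral_cube_prod (n : ℕ) (g : Fin n → ℝ → ℂ) :
    ∫ θ, ∏ i, g i (θ i) ∂cubeMeasure n = ∏ i, ∫ x, g i x ∂mu1 := by
  rw [cube_eq]
  letI : MeasureSpace ℝ := ⟨mu1⟩
  haveI : SigmaFinite (volume : Measure ℝ) := inferInstanceAs (SigmaFinite mu1)
  exact MeasureTheory.integral_fintype_prod_eq_prod g

lemma integrable_cube_prod (n : ℕ) (g : Fin n → ℝ → ℂ) (hg : ∀ i, Integrable (g i) mu1) :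
    Integrable (fun θ : Fin n → ℝ => ∏ i, g i (θ i)) (cubeMeasure n) := by
  rw [cube_eq]
  letI : MeasureSpace ℝ := ⟨mu1⟩
  haveI : SigmaFinite (volume : Measure ℝ) := inferInstanceAs (SigmaFinite mu1)
  exact MeasureTheory.Integrable.fintype_prod hg

def eps {n : ℕ} (σ : Equiv.Perm (Fin n)) : ℂ := ((Equiv.Perm.sign σ : ℤ) : ℂ)

lemma eps_mul_self_ne (n : ℕ) (σ : Equiv.Perm (Fin n)) : eps σ * eps σ = 1 := by
  unfold eps
  rcases Int.units_eq_one_or (Equiv.Perm.sign σ) with h | h <;> rw [h] <;> norm_num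

lemma prod_pairs {M : Type*} [CommMonoid M] (n : ℕ) (f : Fin n → Fin n → M) :
    ∏ p ∈ Finset.univ.filter (fun p : Fin n × Fin n => p.1 < p.2), f p.1 p.2
      = ∏ i, ∏ j ∈ Finset.Ioi i, f i j := by
  rw [← Finset.prod_sigma (Finset.univ) (fun i => Finset.Ioi i) (fun p => f p.1 p.2)]
  refine Finset.prod_nbij' (fun p => ⟨p.1, p.2⟩) (fun p => (p.1, p.2)) ?_ ?_ ?_ ?_ ?_ <;>
    simp +contextual [Finset.mem_sigma]

lemma det_exp (n : ℕ) (θ : Fin n → ℝ) :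
    Matrix.det (Matrix.vandermonde fun j => Complex.exp (Complex.I * (θ j : ℂ)))
      = ∑ σ : Equiv.Perm (Fin n), eps σ * ∏ j, ek ((σ j : ℤ)) (θ j) := by
  rw [Matrix.det_apply']
  rw [← Equiv.sum_comp (Equiv.inv (Equiv.Perm (Fin n)))
    (fun σ => eps σ * ∏ j, ek ((σ j : ℤ)) (θ j))]
  apply Finset.sum_congr rfl
  intro σ _
  simp only [Equiv.inv_apply]
  congr 1
  · unfold eps
    rw [Equiv.Perm.sign_inv]
  · rw [← Equiv.prod_comp σ⁻¹
      (fun i => Matrix.vandermonde (fun j => Complex.exp (Complex.I * (θ j : ℂ))) (σ i) i)]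
    apply Finset.prod_congr rfl
    intro j _
    simp only [Matrix.vandermonde_apply, Equiv.Perm.inv_def, Equiv.apply_symm_apply]
    rw [← Complex.exp_nat_mul, ek]
    congr 1
    push_cast
    ring

lemma vand (n : ℕ) (θ : Fin n → ℝ) :
    ((∏ p ∈ Finset.univ.filter (fun p : Fin n × Fin n => p.1 < p.2),
      ‖Complex.exp (Complex.I * (θ p.1 : ℂ)) - Complex.exp (Complex.I * (θ p.2 : ℂ))‖ ^ 2 : ℝ) : ℂ)
    = ∑ σ : Equiv.Perm (Fin n), ∑ τ : Equiv.Perm (Fin n),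
        eps σ * eps τ * ∏ j, ek ((σ j : ℤ) - (τ j : ℤ)) (θ j) := by
  set v : Fin n → ℂ := fun j => Complex.exp (Complex.I * (θ j : ℂ)) with hv
  have key : ∀ z : ℂ, ((‖z‖ ^ 2 : ℝ) : ℂ) = z * (starRingEnd ℂ) z := by
    intro z
    rw [Complex.sq_norm, Complex.mul_conj]
  set D : ℂ := ∏ p ∈ Finset.univ.filter (fun p : Fin n × Fin n => p.1 < p.2), (v p.2 - v p.1)
    with hD
  have hDdet : D = Matrix.det (Matrix.vandermonde v) := by
    rw [hD, Matrix.det_vandermonde, ← prod_pairs n (fun i j => v j - v i)]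
  have step1 : ((∏ p ∈ Finset.univ.filter (fun p : Fin n × Fin n => p.1 < p.2),
      ‖v p.1 - v p.2‖ ^ 2 : ℝ) : ℂ) = D * (starRingEnd ℂ) D := by
    rw [Complex.ofReal_prod]
    rw [hD, map_prod, ← Finset.prod_mul_distrib]
    apply Finset.prod_congr rfl
    intro p _
    rw [key, show v p.1 - v p.2 = -(v p.2 - v p.1) by ring, map_neg, neg_mul_neg]
  have hconj : (starRingEnd ℂ) (Matrix.det (Matrix.vandermonde v))
      = ∑ τ : Equiv.Perm (Fin n), eps τ * ∏ j, ek (-(τ j : ℤ)) (θ j) := by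
    rw [det_exp, map_sum]
    apply Finset.sum_congr rfl
    intro τ _
    rw [map_mul, map_prod]
    congr 1
    · unfold eps; rw [map_intCast]
    · exact Finset.prod_congr rfl fun j _ => ek_conj _ _
  rw [step1, hDdet, hconj, det_exp, Finset.sum_mul_sum]
  apply Finset.sum_congr rfl
  intro σ _
  apply Finset.sum_congr rfl
  intro τ _
  rw [mul_mul_mul_comm, ← Finset.prod_mul_distrib]
  congr 1
  apply Finset.prod_congr rfl
  intro j _
  rw [ek_mul]
  congr 1

lemma cue_expand (n : ℕ) (ζ : ℂ) (t : ℝ) :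
    genFun n (cueDensity n) 0 t ζ
      = ((n.factorial : ℂ))⁻¹ * ∑ p : Equiv.Perm (Fin n) × Equiv.Perm (Fin n),
          eps p.1 * eps p.2 * ∏ j, FF ζ ((p.1 j : ℤ) - (p.2 j : ℤ)) t := by
  have hpt : ∀ θ : Fin n → ℝ,
      (∏ j, (1 - ζ * (if (0:ℝ) ≤ θ j ∧ θ j ≤ t then (1:ℂ) else 0))) * ((cueDensity n θ : ℝ) : ℂ)
        = ((n.factorial : ℂ))⁻¹ * ∑ p : Equiv.Perm (Fin n) × Equiv.Perm (Fin n),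
            eps p.1 * eps p.2 * ∏ j, (wt ζ t (θ j) * ek ((p.1 j : ℤ) - (p.2 j : ℤ)) (θ j)) := by
    intro θ
    rw [cueDensity, Complex.ofReal_mul, Complex.ofReal_inv, Complex.ofReal_natCast,
      vand n θ, Fintype.sum_prod_type, mul_left_comm]
    congr 1
    rw [Finset.mul_sum]
    apply Finset.sum_congr rfl
    intro σ _
    rw [Finset.mul_sum]
    apply Finset.sum_congr rfl
    intro τ _
    rw [Finset.prod_mul_distrib]
    simp only [wt]
    ring
  rw [genFun, integral_congr_ae (Filter.Eventually.of_forall hpt), integral_const_mul _ _,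
    integral_finset_sum _ (fun p _ =>
      ((integrable_cube_prod n _ (fun j => integrable_wt_ek ζ t _)).const_mul _))]
  congr 1
  apply Finset.sum_congr rfl
  intro p _
  rw [integral_const_mul, integral_cube_prod n (fun j x => wt ζ t x * ek ((p.1 j : ℤ) - (p.2 j : ℤ)) x)]
  rfl

lemma pairs_succ (n : ℕ) :
    (Finset.univ.filter (fun p : Fin (n+1) × Fin (n+1) => p.1 < p.2))
      = ((Finset.univ.filter (fun p : Fin n × Fin n => p.1 < p.2)).map
          (Function.Embedding.prodMap ⟨Fin.castSucc, Fin.castSucc_injective n⟩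
            ⟨Fin.castSucc, Fin.castSucc_injective n⟩)) ∪
        Finset.univ.map ⟨fun i : Fin n => (i.castSucc, Fin.last n),
          fun a b h => Fin.castSucc_injective n (congrArg Prod.fst h)⟩ := by
  ext ⟨a, b⟩
  simp only [Finset.mem_filter, Finset.mem_univ, true_and, Finset.mem_union, Finset.mem_map,
    Function.Embedding.coe_prodMap, Function.Embedding.coeFn_mk, Prod.exists, Prod.map_apply,
    Prod.mk.injEq]
  constructor
  · intro hab
    by_cases hb : b = Fin.last n
    · right
      obtain ⟨a', ha'⟩ := Fin.eq_castSucc_of_ne_last (x := a) (by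
        rintro rfl; rw [hb] at hab; exact absurd hab (lt_irrefl _ ∘ lt_of_le_of_lt (Fin.le_last _)))
      exact ⟨a', Prod.ext ha' hb.symm⟩
    · left
      obtain ⟨b', hb'⟩ := Fin.eq_castSucc_of_ne_last hb
      obtain ⟨a', ha'⟩ := Fin.eq_castSucc_of_ne_last (x := a) (by
        rintro rfl
        exact hb (le_antisymm (Fin.le_last _) (le_of_lt hab)))
      exact ⟨a', b', by rw [← ha', ← hb'] at hab; exact Fin.castSucc_lt_castSucc_iff.mp hab,
        ha', hb'⟩
  · rintro (⟨a', b', hlt, rfl, rfl⟩ | ⟨i, rfl, rfl⟩)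
    · exact Fin.castSucc_lt_castSucc_iff.mpr hlt
    · exact Fin.castSucc_lt_last _

lemma prod_pairs_snoc {M : Type*} [CommMonoid M] (n : ℕ) (f : Fin (n+1) → Fin (n+1) → M) :
    ∏ p ∈ Finset.univ.filter (fun p : Fin (n+1) × Fin (n+1) => p.1 < p.2), f p.1 p.2
      = (∏ p ∈ Finset.univ.filter (fun p : Fin n × Fin n => p.1 < p.2),
          f p.1.castSucc p.2.castSucc) * ∏ j : Fin n, f j.castSucc (Fin.last n) := by
  rw [pairs_succ, Finset.prod_union, Finset.prod_map, Finset.prod_map]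
  · rfl
  · rw [Finset.disjoint_left]
    rintro ⟨x, y⟩ hp1 hp2
    simp only [Finset.mem_map, Function.Embedding.coe_prodMap, Function.Embedding.coeFn_mk,
      Prod.exists, Prod.map_apply, Prod.mk.injEq] at hp1 hp2
    obtain ⟨a', b', -, -, hb⟩ := hp1
    obtain ⟨i, -, hlast⟩ := hp2
    exact (Fin.castSucc_lt_last b').ne (by rw [hb]; exact (congrArg Prod.snd hlast).symm)

lemma ek_at_zero (k : ℤ) : ek k 0 = 1 := by simp [ek]

lemma tcue_cast (n : ℕ) (θ : Fin n → ℝ) :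
    ((tcueDensity n θ : ℝ) : ℂ) = (((n+1).factorial : ℂ))⁻¹ *
      ∑ p : Equiv.Perm (Fin (n+1)) × Equiv.Perm (Fin (n+1)), eps p.1 * eps p.2 *
        ∏ j : Fin n, ek ((p.1 j.castSucc : ℤ) - (p.2 j.castSucc : ℤ)) (θ j) := by
  set Θ : Fin (n+1) → ℝ := Fin.snoc θ 0 with hΘ
  have h2 : (∏ p ∈ Finset.univ.filter (fun p : Fin n × Fin n => p.1 < p.2),
        ‖Complex.exp (Complex.I * (θ p.1 : ℂ)) - Complex.exp (Complex.I * (θ p.2 : ℂ))‖ ^ 2) *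
        ∏ j, ‖1 - Complex.exp (Complex.I * (θ j : ℂ))‖ ^ 2
      = ∏ p ∈ Finset.univ.filter (fun p : Fin (n+1) × Fin (n+1) => p.1 < p.2),
        ‖Complex.exp (Complex.I * (Θ p.1 : ℂ)) - Complex.exp (Complex.I * (Θ p.2 : ℂ))‖ ^ 2 := by
    rw [prod_pairs_snoc n (fun a b =>
      ‖Complex.exp (Complex.I * (Θ a : ℂ)) - Complex.exp (Complex.I * (Θ b : ℂ))‖ ^ 2)]
    congr 1
    · apply Finset.prod_congr rfl
      intro p _
      rw [hΘ]
      simp [Fin.snoc_castSucc]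
    · apply Finset.prod_congr rfl
      intro j _
      rw [hΘ]
      simp only [Fin.snoc_castSucc, Fin.snoc_last]
      rw [Complex.ofReal_zero, mul_zero, Complex.exp_zero, norm_sub_rev]
  have h1 := vand (n+1) Θ
  rw [← h2] at h1
  rw [tcueDensity, Complex.ofReal_mul, Complex.ofReal_mul, Complex.ofReal_inv,
    Complex.ofReal_natCast, mul_assoc, ← Complex.ofReal_mul, h1, Fintype.sum_prod_type]
  congr 1
  apply Finset.sum_congr rfl
  intro σ _
  apply Finset.sum_congr rfl
  intro τ _
  congr 1
  rw [Fin.prod_univ_castSucc]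
  rw [hΘ]
  simp only [Fin.snoc_castSucc, Fin.snoc_last, ek_at_zero, mul_one]

lemma tcue_expand (n : ℕ) (ζ : ℂ) (t : ℝ) :
    genFun n (tcueDensity n) 0 t ζ
      = (((n+1).factorial : ℂ))⁻¹ * ∑ p : Equiv.Perm (Fin (n+1)) × Equiv.Perm (Fin (n+1)),
          eps p.1 * eps p.2 * ∏ j : Fin n, FF ζ ((p.1 j.castSucc : ℤ) - (p.2 j.castSucc : ℤ)) t := by
  have hpt : ∀ θ : Fin n → ℝ,
      (∏ j, (1 - ζ * (if (0:ℝ) ≤ θ j ∧ θ j ≤ t then (1:ℂ) else 0))) * ((tcueDensity n θ : ℝ) : ℂ)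
        = (((n+1).factorial : ℂ))⁻¹ * ∑ p : Equiv.Perm (Fin (n+1)) × Equiv.Perm (Fin (n+1)),
            eps p.1 * eps p.2 *
              ∏ j : Fin n, (wt ζ t (θ j) * ek ((p.1 j.castSucc : ℤ) - (p.2 j.castSucc : ℤ)) (θ j)) := by
    intro θ
    rw [tcue_cast n θ, Fintype.sum_prod_type, Fintype.sum_prod_type, mul_left_comm]
    congr 1
    rw [Finset.mul_sum]
    apply Finset.sum_congr rfl
    intro σ _
    rw [Finset.mul_sum]
    apply Finset.sum_congr rfl
    intro τ _
    rw [Finset.prod_mul_distrib]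
    simp only [wt]
    ring
  rw [genFun, integral_congr_ae (Filter.Eventually.of_forall hpt), integral_const_mul _ _,
    integral_finset_sum _ (fun p _ =>
      ((integrable_cube_prod n _ (fun j => integrable_wt_ek ζ t _)).const_mul _))]
  congr 1
  apply Finset.sum_congr rfl
  intro p _
  rw [integral_const_mul, integral_cube_prod n
    (fun j x => wt ζ t x * ek ((p.1 j.castSucc : ℤ) - (p.2 j.castSucc : ℤ)) x)]
  rfl

def AA (k : ℤ) : ℂ := ∫ θ in Set.Ico (0:ℝ) (2*π), ek k θ

def JJ (k : ℤ) (t : ℝ) : ℂ := ∫ θ in (0:ℝ)..t, ek k θ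

lemma FF_eq (ζ : ℂ) (k : ℤ) (t : ℝ) (h0 : 0 ≤ t) (h2 : t < 2*π) :
    FF ζ k t = (((2*π)⁻¹ : ℝ) : ℂ) * (AA k - ζ * JJ k t) := by
  have hek : IntegrableOn (ek k) (Set.Ico 0 (2*π)) volume :=
    ((ek_continuous k).integrableOn_Icc).mono_set Set.Ico_subset_Icc_self
  have hind : Integrable (Set.indicator (Set.Icc 0 t) (ek k))
      (volume.restrict (Set.Ico 0 (2*π))) :=
    hek.indicator measurableSet_Icc
  rw [FF, mu1, integral_smul_measure, ENNReal.toReal_inv,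
    ENNReal.toReal_ofReal (by positivity : (0:ℝ) ≤ 2*π), Complex.real_smul]
  congr 1
  have hfun : (fun θ => wt ζ t θ * ek k θ)
      = fun θ => ek k θ - ζ * Set.indicator (Set.Icc 0 t) (ek k) θ := by
    funext θ
    rw [wt_eq]
    by_cases h : θ ∈ Set.Icc 0 t
    · simp only [Set.indicator_of_mem h]
      ring
    · simp only [Set.indicator_of_notMem h]
      ring
  rw [hfun, integral_sub hek (hind.const_mul ζ), integral_const_mul]
  congr 2
  rw [integral_indicator measurableSet_Icc, Measure.restrict_restrict measurableSet_Icc,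
    Set.inter_eq_left.mpr (fun x hx => Set.mem_Ico.mpr ⟨(Set.mem_Icc.mp hx).1, lt_of_le_of_lt (Set.mem_Icc.mp hx).2 h2⟩),
    JJ, intervalIntegral.integral_of_le h0, ← integral_Icc_eq_integral_Ioc]

lemma AA_zero {k : ℤ} (hk : k ≠ 0) : AA k = 0 := by
  have h1 : AA k = ∫ θ in (0:ℝ)..(2*π), Complex.exp ((Complex.I * k) * θ) := by
    rw [AA, intervalIntegral.integral_of_le (by positivity : (0:ℝ) ≤ 2*π),
      integral_Ioc_eq_integral_Ioo, ← integral_Ico_eq_integral_Ioo]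
    apply setIntegral_congr_fun measurableSet_Ico
    intro x _
    rw [ek]
  rw [h1, integral_exp_mul_complex (mul_ne_zero Complex.I_ne_zero
    (by exact_mod_cast hk : (k:ℂ) ≠ 0))]
  have : Complex.exp (Complex.I * k * ((2*π : ℝ):ℂ)) = 1 := by
    rw [show Complex.I * k * ((2*π : ℝ):ℂ) = (k : ℂ) * (2 * (π:ℂ) * Complex.I) by
      push_cast; ring]
    exact Complex.exp_int_mul_two_pi_mul_I k
  rw [this]
  simp

lemma JJ_reflect (k : ℤ) (t : ℝ) : JJ k t = ek k t * JJ (-k) t := by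
  have h := intervalIntegral.integral_comp_sub_left (a := (0:ℝ)) (b := t) (ek k) t
  rw [sub_self, sub_zero] at h
  rw [JJ, ← h, JJ, ← intervalIntegral.integral_const_mul]
  apply intervalIntegral.integral_congr
  intro x _
  simp only [ek, ← Complex.exp_add]
  congr 1
  push_cast
  ring

lemma FF_reflect (ζ : ℂ) (k : ℤ) (t : ℝ) (h0 : 0 ≤ t) (h2 : t < 2*π) :
    FF ζ k t = ek k t * FF ζ (-k) t := by
  rw [FF_eq ζ k t h0 h2, FF_eq ζ (-k) t h0 h2]
  have hA : AA k = ek k t * AA (-k) := by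
    rcases eq_or_ne k 0 with rfl | hk
    · rw [neg_zero, ek_zero, one_mul]
    · rw [AA_zero hk, AA_zero (neg_ne_zero.mpr hk), mul_zero]
  rw [hA, JJ_reflect k t]
  ring

lemma hasDerivAt_JJ (k : ℤ) (t : ℝ) : HasDerivAt (JJ k) (ek k t) t :=
  (intervalIntegral.integral_hasStrictDerivAt_right
    ((ek_continuous k).intervalIntegrable _ _)
    ((ek_continuous k).stronglyMeasurableAtFilter _ _)
    (ek_continuous k).continuousAt).hasDerivAt

lemma hasDerivAt_FF (ζ : ℂ) (k : ℤ) (φ : ℝ) (h0 : 0 < φ) (h2 : φ < 2*π) :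
    HasDerivAt (FF ζ k) (-((((2*π)⁻¹ : ℝ) : ℂ) * ζ * ek k φ)) φ := by
  have hG : HasDerivAt (fun t => (((2*π)⁻¹ : ℝ) : ℂ) * (AA k - ζ * JJ k t))
      ((((2*π)⁻¹ : ℝ) : ℂ) * -(ζ * ek k φ)) φ :=
    (((hasDerivAt_JJ k φ).const_mul ζ).const_sub (AA k)).const_mul _
  have heq : FF ζ k =ᶠ[𝓝 φ] fun t => (((2*π)⁻¹ : ℝ) : ℂ) * (AA k - ζ * JJ k t) := by
    filter_upwards [Ioo_mem_nhds h0 h2] with t ht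
    exact FF_eq ζ k t ht.1.le ht.2
  have := hG.congr_of_eventuallyEq heq
  refine this.congr_deriv ?_
  ring

lemma sum_perm_sub (n : ℕ) (σ τ : Equiv.Perm (Fin n)) :
    ∑ j, ((σ j : ℤ) - (τ j : ℤ)) = 0 := by
  rw [Finset.sum_sub_distrib,
    Equiv.sum_comp σ (fun i : Fin n => ((i : ℕ) : ℤ)),
    Equiv.sum_comp τ (fun i : Fin n => ((i : ℕ) : ℤ)), sub_self]

lemma prod_ek (n : ℕ) (k : Fin n → ℤ) (θ : ℝ) : ∏ j, ek (k j) θ = ek (∑ j, k j) θ := by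
  unfold ek
  rw [← Complex.exp_sum]
  congr 1
  push_cast
  rw [Finset.mul_sum, Finset.sum_mul]

lemma step1 (n : ℕ) (ζ : ℂ) (φ : ℝ) (h0 : 0 ≤ φ) (h2 : φ < 2*π)
    (σ τ : Equiv.Perm (Fin n)) (m : Fin n) :
    ek ((σ m : ℤ) - (τ m : ℤ)) φ *
        ∏ j ∈ Finset.univ.erase m, FF ζ ((σ j : ℤ) - (τ j : ℤ)) φ
      = ∏ j ∈ Finset.univ.erase m, FF ζ ((τ j : ℤ) - (σ j : ℤ)) φ := by
  have h1 : ∏ j ∈ Finset.univ.erase m, FF ζ ((σ j : ℤ) - (τ j : ℤ)) φ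
      = ∏ j ∈ Finset.univ.erase m,
          (ek ((σ j : ℤ) - (τ j : ℤ)) φ * FF ζ ((τ j : ℤ) - (σ j : ℤ)) φ) := by
    apply Finset.prod_congr rfl
    intro j _
    rw [FF_reflect ζ _ φ h0 h2, neg_sub]
  rw [h1, Finset.prod_mul_distrib, ← mul_assoc]
  have h3 : ek ((σ m : ℤ) - (τ m : ℤ)) φ *
      ∏ j ∈ Finset.univ.erase m, ek ((σ j : ℤ) - (τ j : ℤ)) φ = 1 := by
    rw [Finset.mul_prod_erase Finset.univ (fun j => ek ((σ j : ℤ) - (τ j : ℤ)) φ)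
      (Finset.mem_univ m),
      prod_ek n (fun j => (σ j : ℤ) - (τ j : ℤ)) φ, sum_perm_sub, ek_zero]
  rw [h3, one_mul]

lemma eps_mul (n : ℕ) (σ τ : Equiv.Perm (Fin n)) : eps (σ * τ) = eps σ * eps τ := by
  unfold eps
  rw [map_mul]
  push_cast
  rfl

lemma swap_sum (n : ℕ) (f : Equiv.Perm (Fin n) → Equiv.Perm (Fin n) → ℂ) :
    ∑ p : Equiv.Perm (Fin n) × Equiv.Perm (Fin n), f p.1 p.2
      = ∑ p : Equiv.Perm (Fin n) × Equiv.Perm (Fin n), f p.2 p.1 := by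
  exact Finset.sum_nbij' (fun p => (p.2, p.1)) (fun p => (p.2, p.1))
    (by simp) (by simp) (by simp) (by simp) (by simp)

lemma map_univ_erase (n : ℕ) (s : Equiv.Perm (Fin (n+1))) (m : Fin (n+1)) :
    (Finset.univ.erase m).map s.toEmbedding = Finset.univ.erase (s m) := by
  rw [Finset.map_erase]
  congr 1
  exact Finset.map_univ_equiv s

lemma sum_erase_indep (n : ℕ) (ζ : ℂ) (φ : ℝ) (m : Fin (n+1)) :
    ∑ p : Equiv.Perm (Fin (n+1)) × Equiv.Perm (Fin (n+1)), eps p.1 * eps p.2 *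
        ∏ j ∈ Finset.univ.erase m, FF ζ ((p.1 j : ℤ) - (p.2 j : ℤ)) φ
      = ∑ p : Equiv.Perm (Fin (n+1)) × Equiv.Perm (Fin (n+1)), eps p.1 * eps p.2 *
        ∏ j ∈ Finset.univ.erase (Fin.last n), FF ζ ((p.1 j : ℤ) - (p.2 j : ℤ)) φ := by
  set s : Equiv.Perm (Fin (n+1)) := Equiv.swap m (Fin.last n) with hs
  have hss : ∀ σ : Equiv.Perm (Fin (n+1)), σ * s * s = σ := by
    intro σ
    rw [mul_assoc, hs, Equiv.swap_mul_self, mul_one]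
  refine Finset.sum_nbij' (fun p => (p.1 * s, p.2 * s)) (fun p => (p.1 * s, p.2 * s))
    (fun _ _ => Finset.mem_univ _) (fun _ _ => Finset.mem_univ _)
    (fun p _ => by simp [hss]) (fun p _ => by simp [hss]) ?_
  rintro ⟨σ, τ⟩ -
  have hmap : ∏ j ∈ Finset.univ.erase (Fin.last n), FF ζ (((σ * s) j : ℤ) - ((τ * s) j : ℤ)) φ
      = ∏ j ∈ Finset.univ.erase m, FF ζ ((σ j : ℤ) - (τ j : ℤ)) φ := by
    have h0 : Finset.univ.erase m = (Finset.univ.erase (Fin.last n)).map s.toEmbedding := by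
      rw [map_univ_erase, hs, Equiv.swap_apply_right]
    rw [h0, Finset.prod_map]
    rfl
  have heps : eps (σ * s) * eps (τ * s) = eps σ * eps τ := by
    rw [eps_mul, eps_mul,
      show eps σ * eps s * (eps τ * eps s) = (eps σ * eps τ) * (eps s * eps s) from by ring,
      eps_mul_self_ne, mul_one]
  rw [hmap, heps]

lemma prod_erase_last (n : ℕ) (g : Fin (n+1) → ℂ) :
    ∏ j ∈ Finset.univ.erase (Fin.last n), g j = ∏ j : Fin n, g j.castSucc := by
  have h : (Finset.univ.erase (Fin.last n))
      = Finset.univ.map ⟨Fin.castSucc, Fin.castSucc_injective n⟩ := by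
    ext j
    simp only [Finset.mem_erase, Finset.mem_univ, and_true, Finset.mem_map,
      Function.Embedding.coeFn_mk, true_and]
    rw [← Fin.exists_castSucc_eq]
  rw [h, Finset.prod_map]
  rfl

end CT

open CT in
/-- `(d/dφ) Φ_{N+1}^{CUE}((0,φ);ζ) = −((N+1)/(2π)) ζ Φ_N^{TCUE}((0,φ);ζ)`
(the statement for `N` eigen-angles of CUE and `N−1` of TCUE, written with `N+1` and `N`). -/
theorem deriv_cue_genFun_eq_tcue_genFun
    (N : ℕ) (ζ : ℂ) (φ : ℝ) (h0 : 0 < φ) (h2 : φ < 2 * π) :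
    HasDerivAt (fun t : ℝ => genFun (N + 1) (cueDensity (N + 1)) 0 t ζ)
      (-(((N : ℂ) + 1) / ((2 * π : ℝ) : ℂ)) * ζ * genFun N (tcueDensity N) 0 φ ζ) φ := by
  classical
  set c : ℂ := (((2*π)⁻¹ : ℝ) : ℂ) with hc
  have hfun : (fun t : ℝ => genFun (N + 1) (cueDensity (N + 1)) 0 t ζ)
      = fun t => (((N+1).factorial : ℂ))⁻¹ *
          ∑ p : Equiv.Perm (Fin (N+1)) × Equiv.Perm (Fin (N+1)),
            eps p.1 * eps p.2 * ∏ j, FF ζ ((p.1 j : ℤ) - (p.2 j : ℤ)) t :=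
    funext fun t => cue_expand (N+1) ζ t
  rw [hfun]
  have hterm : ∀ p : Equiv.Perm (Fin (N+1)) × Equiv.Perm (Fin (N+1)),
      HasDerivAt (fun t => eps p.1 * eps p.2 * ∏ j, FF ζ ((p.1 j : ℤ) - (p.2 j : ℤ)) t)
        (eps p.1 * eps p.2 * ∑ m : Fin (N+1),
          (∏ j ∈ Finset.univ.erase m, FF ζ ((p.1 j : ℤ) - (p.2 j : ℤ)) φ) •
            (-(c * ζ * ek ((p.1 m : ℤ) - (p.2 m : ℤ)) φ))) φ := by
    intro p
    exact (HasDerivAt.fun_finsetProd (u := Finset.univ)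
      (f := fun j t => FF ζ ((p.1 j : ℤ) - (p.2 j : ℤ)) t)
      (fun m _ => hasDerivAt_FF ζ _ φ h0 h2)).const_mul _
  have hD := (HasDerivAt.fun_sum (u := Finset.univ) (fun p _ => hterm p)).const_mul
    ((((N+1).factorial : ℂ))⁻¹)
  refine hD.congr_deriv ?_
  rw [tcue_expand N ζ φ]
  have hkey : ∀ (p : Equiv.Perm (Fin (N+1)) × Equiv.Perm (Fin (N+1))) (m : Fin (N+1)),
      eps p.1 * eps p.2 * ((∏ j ∈ Finset.univ.erase m, FF ζ ((p.1 j : ℤ) - (p.2 j : ℤ)) φ) •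
          (-(c * ζ * ek ((p.1 m : ℤ) - (p.2 m : ℤ)) φ)))
        = -(c * ζ) * (eps p.1 * eps p.2 *
            ∏ j ∈ Finset.univ.erase m, FF ζ ((p.2 j : ℤ) - (p.1 j : ℤ)) φ) := by
    intro p m
    rw [smul_eq_mul, ← step1 (N+1) ζ φ h0.le h2 p.1 p.2 m]
    ring
  have hS : ∀ m : Fin (N+1),
      (∑ p : Equiv.Perm (Fin (N+1)) × Equiv.Perm (Fin (N+1)),
          eps p.1 * eps p.2 * ∏ j ∈ Finset.univ.erase m, FF ζ ((p.2 j : ℤ) - (p.1 j : ℤ)) φ)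
        = ∑ p : Equiv.Perm (Fin (N+1)) × Equiv.Perm (Fin (N+1)),
            eps p.1 * eps p.2 *
              ∏ j : Fin N, FF ζ ((p.1 j.castSucc : ℤ) - (p.2 j.castSucc : ℤ)) φ := by
    intro m
    rw [swap_sum (N+1) (fun σ τ => eps σ * eps τ *
      ∏ j ∈ Finset.univ.erase m, FF ζ ((τ j : ℤ) - (σ j : ℤ)) φ)]
    calc ∑ p : Equiv.Perm (Fin (N+1)) × Equiv.Perm (Fin (N+1)),
          eps p.2 * eps p.1 * ∏ j ∈ Finset.univ.erase m, FF ζ ((p.1 j : ℤ) - (p.2 j : ℤ)) φ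
        = ∑ p : Equiv.Perm (Fin (N+1)) × Equiv.Perm (Fin (N+1)),
            eps p.1 * eps p.2 * ∏ j ∈ Finset.univ.erase m, FF ζ ((p.1 j : ℤ) - (p.2 j : ℤ)) φ := by
          apply Finset.sum_congr rfl
          intro p _
          ring
      _ = ∑ p : Equiv.Perm (Fin (N+1)) × Equiv.Perm (Fin (N+1)),
            eps p.1 * eps p.2 *
              ∏ j ∈ Finset.univ.erase (Fin.last N), FF ζ ((p.1 j : ℤ) - (p.2 j : ℤ)) φ :=
          sum_erase_indep N ζ φ m
      _ = _ := by
          apply Finset.sum_congr rfl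
          intro p _
          rw [prod_erase_last N (fun j => FF ζ ((p.1 j : ℤ) - (p.2 j : ℤ)) φ)]
  have hval : (∑ p : Equiv.Perm (Fin (N+1)) × Equiv.Perm (Fin (N+1)),
        eps p.1 * eps p.2 * ∑ m : Fin (N+1),
          (∏ j ∈ Finset.univ.erase m, FF ζ ((p.1 j : ℤ) - (p.2 j : ℤ)) φ) •
            (-(c * ζ * ek ((p.1 m : ℤ) - (p.2 m : ℤ)) φ)))
      = ((N:ℂ)+1) * (-(c * ζ) * ∑ p : Equiv.Perm (Fin (N+1)) × Equiv.Perm (Fin (N+1)),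
          eps p.1 * eps p.2 *
            ∏ j : Fin N, FF ζ ((p.1 j.castSucc : ℤ) - (p.2 j.castSucc : ℤ)) φ) := by
    calc (∑ p : Equiv.Perm (Fin (N+1)) × Equiv.Perm (Fin (N+1)),
          eps p.1 * eps p.2 * ∑ m : Fin (N+1),
            (∏ j ∈ Finset.univ.erase m, FF ζ ((p.1 j : ℤ) - (p.2 j : ℤ)) φ) •
              (-(c * ζ * ek ((p.1 m : ℤ) - (p.2 m : ℤ)) φ)))
        = ∑ p : Equiv.Perm (Fin (N+1)) × Equiv.Perm (Fin (N+1)), ∑ m : Fin (N+1),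
            -(c * ζ) * (eps p.1 * eps p.2 *
              ∏ j ∈ Finset.univ.erase m, FF ζ ((p.2 j : ℤ) - (p.1 j : ℤ)) φ) := by
          apply Finset.sum_congr rfl
          intro p _
          rw [Finset.mul_sum]
          exact Finset.sum_congr rfl fun m _ => hkey p m
      _ = ∑ m : Fin (N+1), -(c * ζ) *
            ∑ p : Equiv.Perm (Fin (N+1)) × Equiv.Perm (Fin (N+1)),
              eps p.1 * eps p.2 *
                ∏ j ∈ Finset.univ.erase m, FF ζ ((p.2 j : ℤ) - (p.1 j : ℤ)) φ := by
          rw [Finset.sum_comm]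
          exact Finset.sum_congr rfl fun m _ => (Finset.mul_sum _ _ _).symm
      _ = ∑ m : Fin (N+1), -(c * ζ) *
            ∑ p : Equiv.Perm (Fin (N+1)) × Equiv.Perm (Fin (N+1)),
              eps p.1 * eps p.2 *
                ∏ j : Fin N, FF ζ ((p.1 j.castSucc : ℤ) - (p.2 j.castSucc : ℤ)) φ := by
          exact Finset.sum_congr rfl fun m _ => by rw [hS m]
      _ = ((N:ℂ)+1) * (-(c * ζ) * ∑ p : Equiv.Perm (Fin (N+1)) × Equiv.Perm (Fin (N+1)),
            eps p.1 * eps p.2 *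
              ∏ j : Fin N, FF ζ ((p.1 j.castSucc : ℤ) - (p.2 j.castSucc : ℤ)) φ) := by
          rw [Finset.sum_const, Finset.card_univ, Fintype.card_fin, nsmul_eq_mul]
          push_cast
          ring
  rw [hval, hc, Complex.ofReal_inv]
  push_cast
  ring


end
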